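/- Let U ⊆ Y be a C-contracting closed subset, let r ≥ 100C, and let α be a geodesic with ‖N_r(U) ∩ α‖ > 3r, with entry and exit points x, y of α in N_r(U) (i.e. x, y ∈ α ∩ N_r(U), d(x,y) = ‖N_r(U) ∩ α‖, and x precedes y along α). Let β be a geodesic with d_U(α⁻, β⁻) ≤ 10C and d_U(α⁺, β⁺) ≤ 10C. Then β meets N_r(U), and the entry and exit points of β in N_r(U) are within distance 4r of x and y respectively. -/

import Mathlib

open Metric Filter Topology Set MeasureTheory Pointwise

noncomputable section

namespace ConfDyn

/-- `γ` is (the image of) a geodesic segment from `x` to `y`. -/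
def IsGeodesicIn (Y : Type*) [MetricSpace Y] (γ : Set Y) (x y : Y) : Prop :=
  ∃ f : ℝ → Y, f 0 = x ∧ f (dist x y) = y ∧
    (∀ s ∈ Set.Icc (0 : ℝ) (dist x y), ∀ t ∈ Set.Icc (0 : ℝ) (dist x y),
      dist (f s) (f t) = |s - t|) ∧
    γ = f '' Set.Icc (0 : ℝ) (dist x y)

/-- `Y` is a geodesic metric space. -/
def GeodesicSpace (Y : Type*) [MetricSpace Y] : Prop :=
  ∀ x y : Y, ∃ γ : Set Y, IsGeodesicIn Y γ x y

/-- the shortest projection of the point `y` to the subset `X`. -/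
def projSet {Y : Type*} [MetricSpace Y] (X : Set Y) (y : Y) : Set Y :=
  {x ∈ X | dist y x = Metric.infDist y X}

/-- the shortest projection of the subset `A` to the subset `X`. -/
def projSetOf {Y : Type*} [MetricSpace Y] (X A : Set Y) : Set Y :=
  ⋃ a ∈ A, projSet X a

/-- `d_X(x,y)`, the diameter of `π_X(x) ∪ π_X(y)`. -/
def projDist {Y : Type*} [MetricSpace Y] (X : Set Y) (x y : Y) : ENNReal :=
  EMetric.diam (projSet X x ∪ projSet X y)

/-- `X` is a `C`-contracting subset: any geodesic segment at distance at least `C`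
from `X` has shortest projection to `X` of diameter at most `C`. -/
def IsContractingSet {Y : Type*} [MetricSpace Y] (C : ℝ) (X : Set Y) : Prop :=
  ∀ x y : Y, ∀ γ : Set Y, IsGeodesicIn Y γ x y →
    (∀ p ∈ γ, C ≤ Metric.infDist p X) →
    EMetric.diam (projSetOf X γ) ≤ ENNReal.ofReal C

/-- the Busemann function based at `o` associated to `y`, `b_y(x) = d(x,y) - d(o,y)`. -/
def busemannCM {Y : Type*} [MetricSpace Y] (o y : Y) : C(Y, ℝ) :=
  ⟨fun x => dist x y - dist o y,
    (continuous_id.dist continuous_const).sub continuous_const⟩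

/-- the horofunction compactification of `Y`: the closure of `{b_y : y ∈ Y}` in
`C(Y,ℝ)` with the compact-open topology. -/
def horoCpt (Y : Type*) [MetricSpace Y] (o : Y) : Set C(Y, ℝ) :=
  closure (Set.range (busemannCM o))

/-- `ξ` is a point of the horofunction boundary `∂_h Y`. -/
def IsHoroPoint {Y : Type*} [MetricSpace Y] (o : Y) (ξ : C(Y, ℝ)) : Prop :=
  ξ ∈ horoCpt Y o ∧ ∀ y : Y, ξ ≠ busemannCM o y

/-- a sequence of points of `Y` converges to `ξ` in the horofunction compactification. -/
def HoroConv {Y : Type*} [MetricSpace Y] (o : Y) (u : ℕ → Y) (ξ : C(Y, ℝ)) : Prop :=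
  Filter.Tendsto (fun n => busemannCM o (u n)) atTop (nhds ξ)

/-- two horofunctions have (K-)finite difference for some K. -/
def FinDiff {Y : Type*} [MetricSpace Y] (ξ η : C(Y, ℝ)) : Prop :=
  ∃ K : ℝ, ∀ z : Y, |ξ z - η z| ≤ K

/-- the locus of a subset of the horofunction boundary. -/
def locus {Y : Type*} [MetricSpace Y] (o : Y) (Λ : Set C(Y, ℝ)) : Set C(Y, ℝ) :=
  {η | IsHoroPoint o η ∧ ∃ ξ ∈ Λ, FinDiff ξ η}

/-- the finite-difference relation as a setoid on `C(Y,ℝ)`. -/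
def finDiffSetoid (Y : Type*) [MetricSpace Y] : Setoid C(Y, ℝ) where
  r := FinDiff
  iseqv := ⟨fun ξ => ⟨0, fun z => by simp⟩,
    fun h => h.imp (fun K hK z => by rw [abs_sub_comm]; exact hK z),
    fun h₁ h₂ => by
      obtain ⟨K₁, hK₁⟩ := h₁
      obtain ⟨K₂, hK₂⟩ := h₂
      exact ⟨K₁ + K₂, fun z => (abs_sub_le _ _ _).trans (add_le_add (hK₁ z) (hK₂ z))⟩⟩

/-- the limit set of a subset `X ⊆ Y` in the horofunction boundary. -/
def limitSetOf {Y : Type*} [MetricSpace Y] (o : Y) (X : Set Y) : Set C(Y, ℝ) :=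
  {ξ | IsHoroPoint o ξ ∧ ∃ u : ℕ → Y, (∀ n, u n ∈ X) ∧ HoroConv o u ξ}

/-- accumulation points of a sequence of points of `Y` in the horofunction boundary. -/
def accPoints {Y : Type*} [MetricSpace Y] (o : Y) (u : ℕ → Y) : Set C(Y, ℝ) :=
  {ξ | IsHoroPoint o ξ ∧ ∃ φ : ℕ → ℕ, StrictMono φ ∧ HoroConv o (u ∘ φ) ξ}

/-- `X` is a quasi-geodesic: the image of a quasi-isometric embedding of a real interval. -/
def IsQuasiGeodesicSet {Y : Type*} [MetricSpace Y] (X : Set Y) : Prop :=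
  ∃ (c : ℝ) (I : Set ℝ) (φ : ℝ → Y), 1 ≤ c ∧ I.OrdConnected ∧ X = φ '' I ∧
    ∀ s ∈ I, ∀ t ∈ I,
      (1 / c) * |s - t| - c ≤ dist (φ s) (φ t) ∧ dist (φ s) (φ t) ≤ c * |s - t| + c

section GroupAction

variable {Y : Type*} [MetricSpace Y] {G : Type*} [Group G] [MulAction G Y]

/-- `G` acts by isometries on `Y`. -/
def IsometricAction (G Y : Type*) [Group G] [MulAction G Y] [MetricSpace Y] : Prop :=
  ∀ g : G, Isometry (fun y : Y => g • y)

/-- the action of `G` on `Y` is (metrically) proper. -/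
def ProperAction (G Y : Type*) [Group G] [MulAction G Y] [MetricSpace Y] : Prop :=
  ∀ B : Set Y, Bornology.IsBounded B → Set.Finite {g : G | (g • B) ∩ B ≠ ∅}

/-- `G` is non-elementary: no finite-index subgroup is trivial or infinite cyclic. -/
def NonElementary (G : Type*) [Group G] : Prop :=
  ∀ H : Subgroup G, H.index ≠ 0 → ∀ g : G, H ≠ Subgroup.zpowers g

/-- the orbit of `o` under the cyclic group generated by `f`. -/
def cyclicOrbit (o : Y) (f : G) : Set Y :=
  {y : Y | ∃ n : ℤ, y = f ^ n • o}

/-- `f` is a contracting element with `C`-contracting orbit: it has infinite order,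
`n ↦ fⁿ • o` is a quasi-isometric embedding of `ℤ`, and `⟨f⟩ • o` is `C`-contracting. -/
def IsContractingElt (o : Y) (C : ℝ) (f : G) : Prop :=
  (∀ n : ℤ, n ≠ 0 → f ^ n ≠ 1) ∧
  (∃ c : ℝ, 1 ≤ c ∧ ∀ m n : ℤ,
      (1 / c) * |(m : ℝ) - (n : ℝ)| - c ≤ dist (f ^ m • o) (f ^ n • o) ∧
      dist (f ^ m • o) (f ^ n • o) ≤ c * |(m : ℝ) - (n : ℝ)| + c) ∧
  IsContractingSet C (cyclicOrbit o f)

/-- `f` is a contracting element. -/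
def IsContractingEltAny (o : Y) (f : G) : Prop :=
  ∃ C : ℝ, 1 ≤ C ∧ IsContractingElt o C f

/-- the elementary group `E(f)`: elements moving `⟨f⟩ • o` a finite Hausdorff distance. -/
def EGroup (o : Y) (f : G) : Set G :=
  {g : G | EMetric.hausdorffEdist (g • cyclicOrbit o f) (cyclicOrbit o f) ≠ ⊤}

/-- the axis `Ax(f) = E(f) • o`. -/
def axisOf (o : Y) (f : G) : Set Y :=
  (fun g : G => g • o) '' EGroup o f

/-- the family of all `G`-translated axes of `h` and `k`. -/
def axesPairFam (o : Y) (h k : G) : Set (Set Y) :=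
  {S | ∃ g : G, S = g • axisOf o h ∨ S = g • axisOf o k}

/-- `h` and `k` are independent contracting elements: the family of their translated
axes has bounded projection. -/
def IndepElts (o : Y) (h k : G) : Prop :=
  ∃ B : ℝ, 0 < B ∧ ∀ U ∈ axesPairFam o h k, ∀ V ∈ axesPairFam o h k,
    U ≠ V → EMetric.diam (projSetOf U V) ≤ ENNReal.ofReal B

/-- the family of all `G`-translated axes of the triple `f₁, f₂, f₃`. -/
def axesTripleFam (o : Y) (f₁ f₂ f₃ : G) : Set (Set Y) :=
  {S | ∃ g : G, S = g • axisOf o f₁ ∨ S = g • axisOf o f₂ ∨ S = g • axisOf o f₃}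

/-- `F = {f₁,f₂,f₃}` is an admissible triple with constants `C`, `B₀`: three pairwise
independent contracting elements whose translated axes are `C`-contracting with
`B₀`-bounded projection. -/
def IsAdmissibleTriple (o : Y) (C B₀ : ℝ) (f₁ f₂ f₃ : G) : Prop :=
  f₁ ≠ f₂ ∧ f₁ ≠ f₃ ∧ f₂ ≠ f₃ ∧
  IsContractingEltAny o f₁ ∧ IsContractingEltAny o f₂ ∧ IsContractingEltAny o f₃ ∧
  IndepElts o f₁ f₂ ∧ IndepElts o f₁ f₃ ∧ IndepElts o f₂ f₃ ∧
  (∀ S ∈ axesTripleFam o f₁ f₂ f₃, IsContractingSet C S) ∧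
  (∀ U ∈ axesTripleFam o f₁ f₂ f₃, ∀ V ∈ axesTripleFam o f₁ f₂ f₃,
    U ≠ V → EMetric.diam (projSetOf U V) ≤ ENNReal.ofReal B₀)

/-- the geodesic `γ` contains an `(r,f)`-barrier at `g • o`. -/
def HasBarrier (o : Y) (r : ℝ) (f g : G) (γ : Set Y) : Prop :=
  Metric.infDist (g • o) γ ≤ r ∧ Metric.infDist ((g * f) • o) γ ≤ r

/-- the partial cone `Ω_x^F(g • o, r)`. -/
def partialCone (o x : Y) (f₁ f₂ f₃ : G) (g : G) (r : ℝ) : Set Y :=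
  {z | ∃ γ : Set Y, IsGeodesicIn Y γ x z ∧
      (HasBarrier o r f₁ g γ ∨ HasBarrier o r f₂ g γ ∨ HasBarrier o r f₃ g γ)}

/-- the partial shadow `Π_x^F(g • o, r)`: accumulation points of the partial cone in
the horofunction boundary. -/
def partialShadow (o x : Y) (f₁ f₂ f₃ : G) (g : G) (r : ℝ) : Set C(Y, ℝ) :=
  {ξ | IsHoroPoint o ξ ∧ ∃ u : ℕ → Y, (∀ n, u n ∈ partialCone o x f₁ f₂ f₃ g r) ∧
      HoroConv o u ξ}

/-- `ξ` is an `(r,F)`-conical point. -/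
def IsConicalPt (o : Y) (f₁ f₂ f₃ : G) (r : ℝ) (ξ : C(Y, ℝ)) : Prop :=
  ∃ g₀ : G, Set.Infinite {g : G | ξ ∈ partialShadow o (g₀ • o) f₁ f₂ f₃ g r}

/-- the usual cone `Ω_x(y,r)`. -/
def usualCone (x y : Y) (r : ℝ) : Set Y :=
  {z | ∃ γ : Set Y, IsGeodesicIn Y γ x z ∧ ∃ p ∈ γ, dist p y ≤ r}

/-- the usual shadow `Π_x(y,r)`. -/
def usualShadow (o x y : Y) (r : ℝ) : Set C(Y, ℝ) :=
  {ξ | IsHoroPoint o ξ ∧ ∃ u : ℕ → Y, (∀ n, u n ∈ usualCone x y r) ∧ HoroConv o u ξ}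

/-- the set `Λ_c(G)` of conical points of the action. -/
def conicalSet (G : Type*) {Y : Type*} [Group G] [MulAction G Y] [MetricSpace Y]
    (o : Y) : Set C(Y, ℝ) :=
  {ξ | ∃ r : ℝ, 0 < r ∧ ∃ g₀ : G, ∃ u : ℕ → G,
      Filter.Tendsto (fun n => dist o (u n • o)) atTop atTop ∧
      ∀ n, ξ ∈ usualShadow o (g₀ • o) (u n • o) r}

/-- the attracting fixed-point set `[h⁺]`: the locus of the accumulation points of
`{hⁿ o : n > 0}` in the horofunction boundary. -/
def attrFix (o : Y) (h : G) : Set C(Y, ℝ) :=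
  locus o (accPoints o (fun n : ℕ => h ^ (n + 1) • o))

/-- the repelling fixed-point set `[h⁻]`. -/
def repFix (o : Y) (h : G) : Set C(Y, ℝ) :=
  locus o (accPoints o (fun n : ℕ => h ^ (-(n + 1) : ℤ) • o))

/-- the limit set `Λ G y` of the orbit `G • y` in the horofunction boundary. -/
def orbitLimitSet (G : Type*) {Y : Type*} [Group G] [MulAction G Y] [MetricSpace Y]
    (o y : Y) : Set C(Y, ℝ) :=
  {ξ | IsHoroPoint o ξ ∧ ∃ u : ℕ → G,
      Filter.Tendsto (fun n => busemannCM o (u n • y)) atTop (nhds ξ)}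

/-- the action of an isometry `g` on horofunctions. -/
def horoAct [ContinuousConstSMul G Y] (o : Y) (g : G) (ξ : C(Y, ℝ)) : C(Y, ℝ) :=
  ⟨fun y => ξ (g⁻¹ • y) - ξ (g⁻¹ • o),
    (ξ.continuous.comp (continuous_const_smul g⁻¹)).sub continuous_const⟩

/-- the number of orbit points of `Γ ⊆ G` in the closed ball of radius `R` around `o`. -/
def orbitCount (G : Type*) {Y : Type*} [Group G] [MulAction G Y] [MetricSpace Y]
    (o : Y) (Γ : Set G) (R : ℝ) : ℕ :=
  Nat.card {g : G // g ∈ Γ ∧ dist o (g • o) ≤ R}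

/-- the critical exponent `ω_Γ` of a subset `Γ ⊆ G`. -/
def critExp (G : Type*) {Y : Type*} [Group G] [MulAction G Y] [MetricSpace Y]
    (o : Y) (Γ : Set G) : ℝ :=
  Filter.limsup (fun R : ℝ => Real.log (orbitCount G o Γ R) / R) atTop

/-- an `ω`-dimensional `G`-equivariant conformal density on the horofunction boundary:
a family of finite measures supported on `∂_h Y`, normalized at `o`, `G`-equivariant,
with conformal derivative `dμ_x/dμ_y(ξ) = e^{-ω·B_ξ(x,y)}`. -/
def IsConformalDensity (G : Type*) {Y : Type*} [Group G] [MulAction G Y] [MetricSpace Y]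
    [ContinuousConstSMul G Y] [MeasurableSpace C(Y, ℝ)]
    (o : Y) (ω : ℝ) (μ : Y → MeasureTheory.Measure C(Y, ℝ)) : Prop :=
  (∀ x : Y, MeasureTheory.IsFiniteMeasure (μ x)) ∧
  (∀ x : Y, μ x {ξ : C(Y, ℝ) | ¬ IsHoroPoint o ξ} = 0) ∧
  μ o Set.univ = 1 ∧
  (∀ g : G, ∀ x : Y, MeasureTheory.Measure.map (horoAct o g) (μ x) = μ (g • x)) ∧
  (∀ x y : Y, μ x = (μ y).withDensity
      (fun ξ : C(Y, ℝ) => ENNReal.ofReal (Real.exp (-ω * (ξ x - ξ y)))))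

end GroupAction

/-!
Let `p, q` be nearest-point projections of `α⁻, α⁺` to `U` and `p', q'` those of `β⁻, β⁺`.
Up to its entry into `N_r(U)` a geodesic stays at distance `≥ r ≥ C` from `U`, so by contraction
its projection has diameter `≤ C`; hence the entry point is within `r + C` of the projection of
the starting point, and symmetrically for the exit point. If `β` missed `N_r(U)` altogether we
would get `d(p', q') ≤ C`, and the path `x, p, p', q', q, y` would give
`‖N_r(U) ∩ α‖ ≤ 2r + 23C < 3r`. So `β` enters `N_r(U)`, and its entry point is within
`(r + C) + 10C + (r + C) ≤ 4r` of `x`; likewise for the exit point.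
-/

section

variable {Y : Type*} [MetricSpace Y]

def IsometricOn (f : ℝ → Y) (S : Set ℝ) : Prop :=
  ∀ x ∈ S, ∀ y ∈ S, dist (f x) (f y) = |x - y|

namespace IsometricOn

variable {f : ℝ → Y}

theorem mono {S T : Set ℝ} (hf : IsometricOn f T) (hST : S ⊆ T) : IsometricOn f S :=
  fun x hx y hy => hf x (hST hx) y (hST hy)

theorem continuousOn {S : Set ℝ} (hf : IsometricOn f S) : ContinuousOn f S :=
  (LipschitzOnWith.of_dist_le_mul fun x hx y hy => by
    simp [hf x hx y hy, Real.dist_eq]).continuousOn (K := 1)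

theorem reverse {t L : ℝ} (hf : IsometricOn f (Icc t L)) :
    IsometricOn (fun z => f (L - z)) (Icc 0 (L - t)) := by
  intro x hx y hy
  rw [hf (L - x) ⟨by linarith [hx.2], by linarith [hx.1]⟩
    (L - y) ⟨by linarith [hy.2], by linarith [hy.1]⟩, abs_sub_comm]
  ring_nf

theorem isGeodesicIn {L : ℝ} (hf : IsometricOn f (Icc 0 L)) (hL : 0 ≤ L) :
    IsGeodesicIn Y (f '' Icc 0 L) (f 0) (f L) := by
  have hdist : dist (f 0) (f L) = L := by
    rw [hf 0 ⟨le_rfl, hL⟩ L ⟨hL, le_rfl⟩, zero_sub, abs_neg, abs_of_nonneg hL]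
  exact ⟨f, rfl, by rw [hdist], by rwa [hdist], by rw [hdist]⟩

theorem mem_Icc_of_ediam_eq {S : Set ℝ} (hf : IsometricOn f S)
    {A : Set Y} {s t w : ℝ} (hs : s ∈ S) (ht : t ∈ S) (hw : w ∈ S) (hst : s ≤ t)
    (hsA : f s ∈ A) (htA : f t ∈ A) (hwA : f w ∈ A)
    (hmax : ENNReal.ofReal (dist (f s) (f t)) = Metric.ediam (A ∩ f '' S)) : w ∈ Icc s t := by
  have hle : ∀ v ∈ S, f v ∈ A → dist (f w) (f v) ≤ dist (f s) (f t) := fun v hv hvA => by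
    rw [← edist_le_ofReal dist_nonneg, hmax]
    exact Metric.edist_le_ediam_of_mem ⟨hwA, w, hw, rfl⟩ ⟨hvA, v, hv, rfl⟩
  have hws := hle s hs hsA
  have hwt := hle t ht htA
  rw [hf w hw s hs, hf s hs t ht, abs_of_nonpos (sub_nonpos.2 hst)] at hws
  rw [hf w hw t ht, hf s hs t ht, abs_of_nonpos (sub_nonpos.2 hst)] at hwt
  constructor <;> linarith [le_abs_self (w - s), neg_abs_le (w - t)]

end IsometricOn

theorem IsGeodesicIn.left_mem {γ : Set Y} {x y : Y} (hγ : IsGeodesicIn Y γ x y) : x ∈ γ := by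
  obtain ⟨f, hf0, -, -, rfl⟩ := hγ
  exact ⟨0, ⟨le_rfl, dist_nonneg⟩, hf0⟩

theorem IsGeodesicIn.right_mem {γ : Set Y} {x y : Y} (hγ : IsGeodesicIn Y γ x y) : y ∈ γ := by
  obtain ⟨f, -, hfL, -, rfl⟩ := hγ
  exact ⟨dist x y, ⟨dist_nonneg, le_rfl⟩, hfL⟩

theorem mem_cthickening_iff_infDist_le {U : Set Y} (hU : U.Nonempty) {r : ℝ} (hr : 0 ≤ r)
    {x : Y} : x ∈ cthickening r U ↔ infDist x U ≤ r := by
  rw [mem_cthickening_iff, infDist]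
  exact ENNReal.le_ofReal_iff_toReal_le (infEDist_ne_top hU) hr

theorem projSet_nonempty [ProperSpace Y] {U : Set Y} (hU : IsClosed U)
    (hne : U.Nonempty) (y : Y) : (projSet U y).Nonempty := by
  obtain ⟨p, hp, hd⟩ := hU.exists_infDist_eq_dist hne y
  exact ⟨p, hp, hd.symm⟩

theorem dist_le_of_projDist_le {U : Set Y} {x y p q : Y} {c : ℝ} (hc : 0 ≤ c)
    (hp : p ∈ projSet U x) (hq : q ∈ projSet U y) (h : projDist U x y ≤ ENNReal.ofReal c) :
    dist p q ≤ c := by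
  rw [← edist_le_ofReal hc]
  exact (Metric.edist_le_ediam_of_mem (mem_union_left _ hp) (mem_union_right _ hq)).trans h

namespace IsContractingSet

variable {C r : ℝ} {U : Set Y}

theorem dist_projSet_le (hU : IsContractingSet C U) (hC : 0 ≤ C) {γ : Set Y} {x y p q : Y}
    (hγ : IsGeodesicIn Y γ x y) (hfar : ∀ z ∈ γ, C ≤ infDist z U)
    (hp : p ∈ projSet U x) (hq : q ∈ projSet U y) : dist p q ≤ C := by
  rw [← edist_le_ofReal hC]
  exact (Metric.edist_le_ediam_of_mem (mem_biUnion hγ.left_mem hp)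
    (mem_biUnion hγ.right_mem hq)).trans (hU x y γ hγ hfar)

theorem dist_projSet_le_of_forall_notMem (hU : IsContractingSet C U) (hC : 0 ≤ C)
    (hCr : C ≤ r) {f : ℝ → Y} {L : ℝ} (hf : IsometricOn f (Icc 0 L)) (hL : 0 ≤ L)
    (hout : ∀ w ∈ Icc 0 L, f w ∉ cthickening r U) {p q : Y}
    (hp : p ∈ projSet U (f 0)) (hq : q ∈ projSet U (f L)) : dist p q ≤ C := by
  refine hU.dist_projSet_le hC (hf.isGeodesicIn hL) ?_ hp hq
  rintro _ ⟨w, hw, rfl⟩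
  have := hout w hw
  rw [mem_cthickening_iff_infDist_le ⟨p, hp.1⟩ (hC.trans hCr), not_le] at this
  linarith

theorem dist_entry_le [ProperSpace Y] (hU : IsContractingSet C U) (hUcl : IsClosed U)
    (hC : 0 ≤ C) (hCr : C ≤ r) {f : ℝ → Y} {s : ℝ} (hf : IsometricOn f (Icc 0 s)) (hs : 0 ≤ s)
    (hfs : f s ∈ cthickening r U) (hbefore : ∀ w ∈ Ico 0 s, f w ∉ cthickening r U)
    {p : Y} (hp : p ∈ projSet U (f 0)) : dist (f s) p ≤ r + C := by
  have hUne : U.Nonempty := ⟨p, hp.1⟩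
  have hr : 0 ≤ r := hC.trans hCr
  rw [mem_cthickening_iff_infDist_le hUne hr] at hfs
  -- the segment `[f 0, f w]` stays outside `N_r(U)`, so `π_U(f w)` is `C`-close to `p`
  have approx : ∀ w ∈ Ico 0 s, dist (f s) p ≤ r + C + 2 * (s - w) := by
    intro w hw
    have hwsub : Icc 0 w ⊆ Icc 0 s := Icc_subset_Icc le_rfl hw.2.le
    obtain ⟨q, hq⟩ := projSet_nonempty hUcl hUne (f w)
    have hpq : dist p q ≤ C := hU.dist_projSet_le_of_forall_notMem hC hCr (hf.mono hwsub)
      hw.1 (fun v hv => hbefore v ⟨hv.1, hv.2.trans_lt hw.2⟩) hp hq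
    have hws : dist (f w) (f s) = s - w := by
      rw [hf w (hwsub ⟨hw.1, le_rfl⟩) s ⟨hs, le_rfl⟩, abs_sub_comm, abs_of_pos (by linarith [hw.2])]
    have hwq : dist (f w) q ≤ r + (s - w) := by
      rw [hq.2, ← hws]
      linarith [infDist_le_infDist_add_dist (x := f w) (y := f s) (s := U)]
    calc dist (f s) p ≤ dist (f s) (f w) + dist (f w) q + dist q p := dist_triangle4 _ _ _ _
      _ ≤ r + C + 2 * (s - w) := by rw [dist_comm, hws, dist_comm q]; linarith
  rcases hs.eq_or_lt with rfl | hs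
  · rw [hp.2]; linarith
  · refine le_of_forall_pos_le_add fun ε hε => ?_
    have := approx (max 0 (s - ε / 2)) ⟨le_max_left _ _, max_lt hs (by linarith)⟩
    linarith [le_max_right 0 (s - ε / 2)]

theorem dist_exit_le [ProperSpace Y] (hU : IsContractingSet C U) (hUcl : IsClosed U)
    (hC : 0 ≤ C) (hCr : C ≤ r) {f : ℝ → Y} {t L : ℝ} (hf : IsometricOn f (Icc t L)) (htL : t ≤ L)
    (hft : f t ∈ cthickening r U) (hafter : ∀ w ∈ Ioc t L, f w ∉ cthickening r U)
    {q : Y} (hq : q ∈ projSet U (f L)) : dist (f t) q ≤ r + C := by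
  have := hU.dist_entry_le hUcl hC hCr hf.reverse (sub_nonneg.2 htL)
    (by rwa [sub_sub_cancel]) (fun w hw => hafter (L - w) ⟨by linarith [hw.2], by linarith [hw.1]⟩)
    (by rwa [sub_zero])
  rwa [sub_sub_cancel] at this

theorem dist_entry_exit_le [ProperSpace Y] (hU : IsContractingSet C U) (hUcl : IsClosed U)
    (hC : 0 ≤ C) (hCr : C ≤ r) {f : ℝ → Y} {L s t : ℝ} (hf : IsometricOn f (Icc 0 L))
    (hs : s ∈ Icc 0 L) (ht : t ∈ Icc 0 L) (hfs : f s ∈ cthickening r U)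
    (hft : f t ∈ cthickening r U) (hN : ∀ w ∈ Icc 0 L, f w ∈ cthickening r U → w ∈ Icc s t)
    {p q : Y} (hp : p ∈ projSet U (f 0)) (hq : q ∈ projSet U (f L)) :
    dist (f s) p ≤ r + C ∧ dist (f t) q ≤ r + C :=
  ⟨hU.dist_entry_le hUcl hC hCr (hf.mono (Icc_subset_Icc le_rfl hs.2)) hs.1 hfs
    (fun w hw hwN => hw.2.not_ge (hN w ⟨hw.1, hw.2.le.trans hs.2⟩ hwN).1) hp,
  hU.dist_exit_le hUcl hC hCr (hf.mono (Icc_subset_Icc ht.1 le_rfl)) ht.2 hft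
    (fun w hw hwN => hw.1.not_ge (hN w ⟨ht.1.trans hw.1.le, hw.2⟩ hwN).2) hq⟩

end IsContractingSet

theorem _root_.ContinuousOn.exists_first_last_mem_preimage {g : ℝ → Y} {a b : ℝ}
    (hg : ContinuousOn g (Icc a b)) {N : Set Y} (hN : IsClosed N)
    (hne : ∃ w ∈ Icc a b, g w ∈ N) :
    ∃ u ∈ Icc a b, ∃ v ∈ Icc a b, g u ∈ N ∧ g v ∈ N ∧
      ∀ w ∈ Icc a b, g w ∈ N → w ∈ Icc u v := by
  have hK : IsCompact (Icc a b ∩ g ⁻¹' N) := isCompact_Icc.of_isClosed_subset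
    (hg.preimage_isClosed_of_isClosed isClosed_Icc hN) inter_subset_left
  obtain ⟨u, ⟨hu, hgu⟩, hu_first⟩ := hK.exists_isLeast hne
  obtain ⟨v, ⟨hv, hgv⟩, hv_last⟩ := hK.exists_isGreatest hne
  exact ⟨u, hu, v, hv, hgu, hgv, fun w hw hgw => ⟨hu_first ⟨hw, hgw⟩, hv_last ⟨hw, hgw⟩⟩⟩

end

theorem statement6_general {Y : Type*} [MetricSpace Y] [ProperSpace Y]
    (C r : ℝ) (hC : 1 ≤ C) (hr : 100 * C ≤ r)
    (U : Set Y) (hUcl : IsClosed U) (hUcon : IsContractingSet C U)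
    (a b : Y) (f : ℝ → Y) (hf0 : f 0 = a) (hfl : f (dist a b) = b)
    (hiso : ∀ s ∈ Set.Icc (0 : ℝ) (dist a b), ∀ t ∈ Set.Icc (0 : ℝ) (dist a b),
      dist (f s) (f t) = |s - t|)
    (α : Set Y) (hα : α = f '' Set.Icc (0 : ℝ) (dist a b))
    (hbig : ENNReal.ofReal (3 * r) < EMetric.diam (Metric.cthickening r U ∩ α))
    (s t : ℝ) (hs : s ∈ Set.Icc (0 : ℝ) (dist a b)) (ht : t ∈ Set.Icc (0 : ℝ) (dist a b))
    (hst : s ≤ t)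
    (hsmem : f s ∈ Metric.cthickening r U) (htmem : f t ∈ Metric.cthickening r U)
    (hmax : ENNReal.ofReal (dist (f s) (f t)) = EMetric.diam (Metric.cthickening r U ∩ α))
    (a' b' : Y) (g : ℝ → Y) (hg0 : g 0 = a') (hgl : g (dist a' b') = b')
    (hgiso : ∀ s' ∈ Set.Icc (0 : ℝ) (dist a' b'), ∀ t' ∈ Set.Icc (0 : ℝ) (dist a' b'),
      dist (g s') (g t') = |s' - t'|)
    (hproj1 : projDist U a a' ≤ ENNReal.ofReal (10 * C))
    (hproj2 : projDist U b b' ≤ ENNReal.ofReal (10 * C)) :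
    ∃ u ∈ Set.Icc (0 : ℝ) (dist a' b'), ∃ v ∈ Set.Icc (0 : ℝ) (dist a' b'), u ≤ v ∧
      g u ∈ Metric.cthickening r U ∧ g v ∈ Metric.cthickening r U ∧
      (∀ w ∈ Set.Icc (0 : ℝ) (dist a' b'), g w ∈ Metric.cthickening r U → u ≤ w ∧ w ≤ v) ∧
      dist (g u) (f s) ≤ 4 * r ∧ dist (g v) (f t) ≤ 4 * r := by
  have hC0 : 0 ≤ C := by linarith
  have hCr : C ≤ r := by linarith
  have hf : IsometricOn f (Icc 0 (dist a b)) := hiso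
  have hg : IsometricOn g (Icc 0 (dist a' b')) := hgiso
  have hUne : U.Nonempty := nonempty_iff_ne_empty.2 fun hU => by simp [hU] at hsmem
  obtain ⟨p, hp⟩ := projSet_nonempty hUcl hUne a
  obtain ⟨q, hq⟩ := projSet_nonempty hUcl hUne b
  obtain ⟨p', hp'⟩ := projSet_nonempty hUcl hUne a'
  obtain ⟨q', hq'⟩ := projSet_nonempty hUcl hUne b'
  have hpp' := dist_le_of_projDist_le (by linarith) hp hp' hproj1
  have hqq' := dist_le_of_projDist_le (by linarith) hq hq' hproj2
  obtain ⟨hsp, htq⟩ := hUcon.dist_entry_exit_le hUcl hC0 hCr hf hs ht hsmem htmem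
    (fun w hw hwN => hf.mem_Icc_of_ediam_eq hs ht hw hst hsmem htmem hwN (hα ▸ hmax))
    (by rwa [hf0]) (by rwa [hfl])
  have hβN : ∃ w ∈ Icc 0 (dist a' b'), g w ∈ cthickening r U := by
    by_contra! hout
    have hp'q' := hUcon.dist_projSet_le_of_forall_notMem hC0 hCr hg dist_nonneg hout
      (by rwa [hg0]) (by rwa [hgl])
    have h3r : 3 * r < dist (f s) (f t) := by
      rwa [← hmax, ENNReal.ofReal_lt_ofReal_iff_of_nonneg (by linarith)] at hbig
    linarith [dist_triangle4 (f s) p p' q', dist_triangle (f s) q' (f t),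
      dist_triangle q' q (f t), dist_comm q q', dist_comm q (f t)]
  obtain ⟨u, hu, v, hv, hgu, hgv, hβ⟩ :=
    hg.continuousOn.exists_first_last_mem_preimage isClosed_cthickening hβN
  obtain ⟨hup', hvq'⟩ := hUcon.dist_entry_exit_le hUcl hC0 hCr hg hu hv hgu hgv hβ
    (by rwa [hg0]) (by rwa [hgl])
  refine ⟨u, hu, v, hv, (hβ v hv hgv).1, hgu, hgv, hβ, ?_, ?_⟩
  · linarith [dist_triangle4 (g u) p' p (f s), dist_comm p' p, dist_comm p (f s)]
  · linarith [dist_triangle4 (g v) q' q (f t), dist_comm q' q, dist_comm q (f t)]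

/-- if `β` is a geodesic whose endpoints project `10C`-close to those of
`α` on a contracting set `U`, then `β` meets `N_r(U)` and its entry and exit points in
`N_r(U)` are `4r`-close to those of `α`. -/
theorem statement6 {Y : Type*} [MetricSpace Y] [ProperSpace Y]
    (hY : GeodesicSpace Y) (C r : ℝ) (hC : 1 ≤ C) (hr : 100 * C ≤ r)
    (U : Set Y) (hUcl : IsClosed U) (hUcon : IsContractingSet C U)
    (a b : Y) (f : ℝ → Y) (hf0 : f 0 = a) (hfl : f (dist a b) = b)
    (hiso : ∀ s ∈ Set.Icc (0 : ℝ) (dist a b), ∀ t ∈ Set.Icc (0 : ℝ) (dist a b),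
      dist (f s) (f t) = |s - t|)
    (α : Set Y) (hα : α = f '' Set.Icc (0 : ℝ) (dist a b))
    (hbig : ENNReal.ofReal (3 * r) < EMetric.diam (Metric.cthickening r U ∩ α))
    (s t : ℝ) (hs : s ∈ Set.Icc (0 : ℝ) (dist a b)) (ht : t ∈ Set.Icc (0 : ℝ) (dist a b))
    (hst : s ≤ t)
    (hsmem : f s ∈ Metric.cthickening r U) (htmem : f t ∈ Metric.cthickening r U)
    (hmax : ENNReal.ofReal (dist (f s) (f t)) = EMetric.diam (Metric.cthickening r U ∩ α))
    (a' b' : Y) (g : ℝ → Y) (hg0 : g 0 = a') (hgl : g (dist a' b') = b')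
    (hgiso : ∀ s' ∈ Set.Icc (0 : ℝ) (dist a' b'), ∀ t' ∈ Set.Icc (0 : ℝ) (dist a' b'),
      dist (g s') (g t') = |s' - t'|)
    (β : Set Y) (hβ : β = g '' Set.Icc (0 : ℝ) (dist a' b'))
    (hproj1 : projDist U a a' ≤ ENNReal.ofReal (10 * C))
    (hproj2 : projDist U b b' ≤ ENNReal.ofReal (10 * C)) :
    ∃ u ∈ Set.Icc (0 : ℝ) (dist a' b'), ∃ v ∈ Set.Icc (0 : ℝ) (dist a' b'), u ≤ v ∧
      g u ∈ Metric.cthickening r U ∧ g v ∈ Metric.cthickening r U ∧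
      (∀ w ∈ Set.Icc (0 : ℝ) (dist a' b'), g w ∈ Metric.cthickening r U → u ≤ w ∧ w ≤ v) ∧
      dist (g u) (f s) ≤ 4 * r ∧ dist (g v) (f t) ≤ 4 * r :=
  statement6_general C r hC hr U hUcl hUcon a b f hf0 hfl hiso α hα hbig s t hs ht hst hsmem htmem
    hmax a' b' g hg0 hgl hgiso hproj1 hproj2

end ConfDyn
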